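/- arXiv:1904.03510 — 9 statements merged into one kernel-verified Lean document; each statement's English description precedes it below -/
import Mathlib

section
/- For integers a, b with a ≠ 0 and b ≥ 0, the function d(x₁, x₂) = a²(x₁² + x₂²) − 2b(x₁ − x₂)² on ℤ² ∖ {0} attains its minimum at (1, 0) (i.e., d(x₁,x₂) ≥ a² − 2b for all nonzero (x₁,x₂) ∈ ℤ²) if and only if a² ≥ 6b. -/
/-!
Write `S = x₁² + x₂²` and `Q = x₁² + x₁x₂ + x₂²`. Then
`d(x₁, x₂) - (a² - 2b) = (a² - 6b)(S - 1) + 4b(Q - 1)`, and both `S` and `Q` are at least `1` on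
`ℤ² ∖ {0}`, so `a² ≥ 6b` suffices. Conversely `d(1, -1) = 2a² - 8b` is below `a² - 2b` as soon as
`a² < 6b`.
-/

namespace Int

theorem one_le_sq_add_sq {x y : ℤ} (h : ¬(x = 0 ∧ y = 0)) : 1 ≤ x ^ 2 + y ^ 2 := by
  have hne : x * x + y * y ≠ 0 := mt mul_self_add_mul_self_eq_zero.mp h
  rw [sq, sq]
  exact lt_of_le_of_ne (add_nonneg (mul_self_nonneg x) (mul_self_nonneg y)) hne.symm

theorem one_le_sq_add_mul_add_sq {x y : ℤ} (h : ¬(x = 0 ∧ y = 0)) :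
    1 ≤ x ^ 2 + x * y + y ^ 2 := by
  have hS := one_le_sq_add_sq h
  have h2Q : 2 * (x ^ 2 + x * y + y ^ 2) = x ^ 2 + y ^ 2 + (x + y) ^ 2 := by ring
  linarith [sq_nonneg (x + y)]

end Int

theorem sq_mul_sq_add_sq_sub_sub_eq {R : Type*} [CommRing R] (a b x y : R) :
    a ^ 2 * (x ^ 2 + y ^ 2) - 2 * b * (x - y) ^ 2 - (a ^ 2 - 2 * b) =
      (a ^ 2 - 6 * b) * (x ^ 2 + y ^ 2 - 1) + 4 * b * (x ^ 2 + x * y + y ^ 2 - 1) := by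
  ring

theorem stmt_4_general (a b : ℤ) (hb : 0 ≤ b) :
    (∀ x₁ x₂ : ℤ, ¬(x₁ = 0 ∧ x₂ = 0) →
        a ^ 2 * (x₁ ^ 2 + x₂ ^ 2) - 2 * b * (x₁ - x₂) ^ 2 ≥ a ^ 2 - 2 * b) ↔
      a ^ 2 ≥ 6 * b := by
  constructor
  · intro hmin
    have h := hmin 1 (-1) (by simp)
    norm_num at h
    linarith
  · intro h6 x₁ x₂ hx
    have hS := sub_nonneg.mpr (Int.one_le_sq_add_sq hx)
    have hQ := sub_nonneg.mpr (Int.one_le_sq_add_mul_add_sq hx)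
    have key := sq_mul_sq_add_sq_sub_sub_eq a b x₁ x₂
    linarith [mul_nonneg (sub_nonneg.mpr h6) hS, mul_nonneg hb hQ]

theorem stmt_4 (a b : ℤ) (ha : a ≠ 0) (hb : 0 ≤ b) (hdisc : a ^ 2 - 4 * b > 0) :
    (∀ x₁ x₂ : ℤ, ¬(x₁ = 0 ∧ x₂ = 0) →
        a ^ 2 * (x₁ ^ 2 + x₂ ^ 2) - 2 * b * (x₁ - x₂) ^ 2 ≥ a ^ 2 - 2 * b) ↔
      a ^ 2 ≥ 6 * b :=
  stmt_4_general a b hb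
end

section
/- For integers a, b with a ≠ 0, b < 0, and a² − 4b > 0, the minimum of d(x₁, x₂) = a²(x₁² + x₂²) − 2b(x₁ − x₂)² over nonzero (x₁, x₂) ∈ ℤ² equals a² − 2b if and only if a² ≥ −2b. -/
/-!
The value a² − 2b is attained at (1, 0), and the diagonal point (1, 1) has value 2a², so the
bound a² ≥ −2b is necessary. Conversely, for b ≤ 0 both terms of the form are nonnegative: off
the diagonal each is at least its value at (1, 0), and on the diagonal the form is 2a²x² ≥ 2a².
-/

lemma Int.one_le_sq_of_ne_zero {x : ℤ} (hx : x ≠ 0) : 1 ≤ x ^ 2 :=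
  Int.add_one_le_of_lt (sq_pos_of_ne_zero hx)

lemma Int.one_le_sq_add_sq_s5 {x₁ x₂ : ℤ} (hx : ¬(x₁ = 0 ∧ x₂ = 0)) : 1 ≤ x₁ ^ 2 + x₂ ^ 2 := by
  rcases eq_or_ne x₁ 0 with rfl | h₁
  · have h₂ : x₂ ≠ 0 := fun h₂ => hx ⟨rfl, h₂⟩
    linarith [Int.one_le_sq_of_ne_zero h₂]
  · linarith [Int.one_le_sq_of_ne_zero h₁, sq_nonneg x₂]

lemma sub_le_form_of_ne_zero {a b x₁ x₂ : ℤ} (hb : b ≤ 0) (hab : -2 * b ≤ a ^ 2)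
    (hx : ¬(x₁ = 0 ∧ x₂ = 0)) :
    a ^ 2 - 2 * b ≤ a ^ 2 * (x₁ ^ 2 + x₂ ^ 2) - 2 * b * (x₁ - x₂) ^ 2 := by
  have hsum := Int.one_le_sq_add_sq_s5 hx
  rcases eq_or_ne x₁ x₂ with rfl | hne
  · have hx₁ : 1 ≤ x₁ ^ 2 := Int.one_le_sq_of_ne_zero fun h => hx ⟨h, h⟩
    nlinarith [sq_nonneg a]
  · have hdiff : 1 ≤ (x₁ - x₂) ^ 2 := Int.one_le_sq_of_ne_zero (sub_ne_zero.mpr hne)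
    nlinarith [sq_nonneg a]

theorem stmt_5_general (a b : ℤ) (hb : b < 0) :
    IsLeast {v : ℤ | ∃ x₁ x₂ : ℤ, ¬(x₁ = 0 ∧ x₂ = 0) ∧
        v = a ^ 2 * (x₁ ^ 2 + x₂ ^ 2) - 2 * b * (x₁ - x₂) ^ 2} (a ^ 2 - 2 * b) ↔
      a ^ 2 ≥ -2 * b := by
  constructor
  · intro h
    have := h.2 ⟨1, 1, by simp, rfl⟩
    norm_num at this
    linarith
  · intro hab
    refine ⟨⟨1, 0, by simp, by ring⟩, ?_⟩
    rintro v ⟨x₁, x₂, hx, rfl⟩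
    exact sub_le_form_of_ne_zero hb.le hab hx

theorem stmt_5 (a b : ℤ) (ha : a ≠ 0) (hb : b < 0) (hdisc : a ^ 2 - 4 * b > 0) :
    IsLeast {v : ℤ | ∃ x₁ x₂ : ℤ, ¬(x₁ = 0 ∧ x₂ = 0) ∧
        v = a ^ 2 * (x₁ ^ 2 + x₂ ^ 2) - 2 * b * (x₁ - x₂) ^ 2} (a ^ 2 - 2 * b) ↔
      a ^ 2 ≥ -2 * b :=
  stmt_5_general a b hb
end

section
/- Let a, b ∈ ℤ with a ≠ 0 and a² < 4b (so x² + ax + b has complex conjugate roots). The minimum of d(x₁,x₂) = (a²/4)(x₁+x₂)² + ((4b−a²)/4)(x₁−x₂)² over nonzero integer pairs (x₁, x₂) equals b if and only if b ≤ a² ≤ 3b. -/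
lemma aux_pos (x y : ℤ) (h : ¬(x = 0 ∧ y = 0)) : 1 ≤ x ^ 2 - x * y + y ^ 2 := by
  have hpos : 0 < x ^ 2 - x * y + y ^ 2 := by
    rcases eq_or_ne y 0 with hy | hy
    · subst hy
      have hx : x ≠ 0 := by tauto
      have : 1 ≤ |x| := Int.one_le_abs hx
      nlinarith [sq_abs x]
    · have hy1 : 1 ≤ |y| := Int.one_le_abs hy
      have hy2 : 1 ≤ y ^ 2 := by nlinarith [sq_abs y]
      nlinarith [sq_nonneg (2 * x - y)]
  omega

theorem stmt_6 (a b : ℤ) (ha : a ≠ 0) (hdisc : a ^ 2 - 4 * b < 0) :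
    IsLeast {v : ℝ | ∃ x₁ x₂ : ℤ, ¬(x₁ = 0 ∧ x₂ = 0) ∧
        v = (a : ℝ) ^ 2 / 4 * ((x₁ : ℝ) + (x₂ : ℝ)) ^ 2 +
            (4 * (b : ℝ) - (a : ℝ) ^ 2) / 4 * ((x₁ : ℝ) - (x₂ : ℝ)) ^ 2} (b : ℝ) ↔
      (b ≤ a ^ 2 ∧ a ^ 2 ≤ 3 * b) := by
  have hb : (0 : ℤ) < b := by nlinarith [sq_nonneg a]
  constructor
  · rintro ⟨-, hlb⟩
    have h1 : (b : ℝ) ≤ ((a : ℝ) ^ 2) := by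
      have := hlb (show _ ∈ _ from ⟨1, 1, by norm_num, rfl⟩)
      push_cast at this
      linarith [this]
    have h2 : (b : ℝ) ≤ 4 * (b:ℝ) - (a:ℝ) ^ 2 := by
      have := hlb (show _ ∈ _ from ⟨1, -1, by norm_num, rfl⟩)
      push_cast at this
      linarith [this]
    constructor
    · exact_mod_cast h1
    · have : (a:ℝ)^2 ≤ 3 * (b:ℝ) := by linarith
      exact_mod_cast this
  · rintro ⟨h1, h2⟩
    constructor
    · exact ⟨1, 0, by norm_num, by push_cast; ring⟩
    · rintro v ⟨x₁, x₂, hx, rfl⟩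
      have k1 : 1 ≤ x₁ ^ 2 - x₁ * x₂ + x₂ ^ 2 := aux_pos x₁ x₂ hx
      have k2 : 1 ≤ x₁ ^ 2 + x₁ * x₂ + x₂ ^ 2 := by
        have := aux_pos x₁ (-x₂) (by simpa using hx)
        nlinarith [this]
      have hZ : b ≤ b * (x₁ ^ 2 + x₂ ^ 2) + (a ^ 2 - 2 * b) * (x₁ * x₂) := by
        rcases le_or_gt 0 (x₁ * x₂) with hs | hs
        · nlinarith [k1, h1, h2, hb, hs]
        · nlinarith [k2, h1, h2, hb, hs]
      have hZR : (b : ℝ) ≤ (b:ℝ) * ((x₁:ℝ) ^ 2 + (x₂:ℝ) ^ 2) +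
          ((a:ℝ) ^ 2 - 2 * (b:ℝ)) * ((x₁:ℝ) * (x₂:ℝ)) := by exact_mod_cast hZ
      nlinarith [hZR]
end

section
/- Let a, b ∈ ℤ with a ≠ 0, b ≥ 0, and a² > 3b. The quadratic form Q(x₁,x₂,x₃) = (a² − 2b)(x₁² + x₂² + x₃²) + 2b(x₁x₂ + x₁x₃ + x₂x₃) satisfies Q(x) ≥ a² − 2b for all nonzero x ∈ ℤ³ if and only if a² ≥ 4b. -/
/-!
Writing `S = x₁² + x₂² + x₃²` and `P = x₁x₂ + x₁x₃ + x₂x₃`, the form is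
`Q = (a² - 4b) S + 2b (S + P)`. On nonzero integer vectors `S ≥ 1`, and `S + P ≥ 1` because
`2 (S + P)` is the positive definite form `(x₁ + x₂)² + (x₁ + x₃)² + (x₂ + x₃)²`; so `a² ≥ 4b`
gives `Q ≥ (a² - 4b) + 2b`. Conversely `Q(1, -1, 0) = 2(a² - 3b)`, which is at least
`a² - 2b` only if `a² ≥ 4b`.
-/

section

variable {R : Type*} [CommRing R] [LinearOrder R] [IsStrictOrderedRing R]

lemma sum_sq_three_pos {x₁ x₂ x₃ : R} (hx : ¬(x₁ = 0 ∧ x₂ = 0 ∧ x₃ = 0)) :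
    0 < x₁ ^ 2 + x₂ ^ 2 + x₃ ^ 2 := by
  by_contra! h
  exact hx ⟨by nlinarith [sq_nonneg x₁, sq_nonneg x₂, sq_nonneg x₃],
    by nlinarith [sq_nonneg x₁, sq_nonneg x₂, sq_nonneg x₃],
    by nlinarith [sq_nonneg x₁, sq_nonneg x₂, sq_nonneg x₃]⟩

lemma sum_sq_add_sum_mul_three_pos {x₁ x₂ x₃ : R} (hx : ¬(x₁ = 0 ∧ x₂ = 0 ∧ x₃ = 0)) :
    0 < x₁ ^ 2 + x₂ ^ 2 + x₃ ^ 2 + (x₁ * x₂ + x₁ * x₃ + x₂ * x₃) := by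
  have hsums : ¬(x₁ + x₂ = 0 ∧ x₁ + x₃ = 0 ∧ x₂ + x₃ = 0) := by
    rintro ⟨h₁₂, h₁₃, h₂₃⟩
    exact hx ⟨by linarith, by linarith, by linarith⟩
  have := sum_sq_three_pos hsums
  nlinarith

end

theorem stmt_9_general (a b : ℤ) (hb : 0 ≤ b) :
    (∀ x₁ x₂ x₃ : ℤ, ¬(x₁ = 0 ∧ x₂ = 0 ∧ x₃ = 0) →
        (a ^ 2 - 2 * b) * (x₁ ^ 2 + x₂ ^ 2 + x₃ ^ 2) +
            2 * b * (x₁ * x₂ + x₁ * x₃ + x₂ * x₃) ≥ a ^ 2 - 2 * b) ↔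
      a ^ 2 ≥ 4 * b := by
  constructor
  · intro hQ
    have := hQ 1 (-1) 0 (by simp)
    linarith
  · intro h4b x₁ x₂ x₃ hx
    have hS : 1 ≤ x₁ ^ 2 + x₂ ^ 2 + x₃ ^ 2 := sum_sq_three_pos hx
    have hSP : 1 ≤ x₁ ^ 2 + x₂ ^ 2 + x₃ ^ 2 + (x₁ * x₂ + x₁ * x₃ + x₂ * x₃) :=
      sum_sq_add_sum_mul_three_pos hx
    calc a ^ 2 - 2 * b = (a ^ 2 - 4 * b) * 1 + 2 * b * 1 := by ring
      _ ≤ (a ^ 2 - 4 * b) * (x₁ ^ 2 + x₂ ^ 2 + x₃ ^ 2) +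
          2 * b * (x₁ ^ 2 + x₂ ^ 2 + x₃ ^ 2 + (x₁ * x₂ + x₁ * x₃ + x₂ * x₃)) :=
        add_le_add (mul_le_mul_of_nonneg_left hS (by linarith))
          (mul_le_mul_of_nonneg_left hSP (by linarith))
      _ = _ := by ring

theorem stmt_9 (a b : ℤ) (ha : a ≠ 0) (hb : 0 ≤ b) (h3b : a ^ 2 > 3 * b) :
    (∀ x₁ x₂ x₃ : ℤ, ¬(x₁ = 0 ∧ x₂ = 0 ∧ x₃ = 0) →
        (a ^ 2 - 2 * b) * (x₁ ^ 2 + x₂ ^ 2 + x₃ ^ 2) +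
            2 * b * (x₁ * x₂ + x₁ * x₃ + x₂ * x₃) ≥ a ^ 2 - 2 * b) ↔
      a ^ 2 ≥ 4 * b :=
  stmt_9_general a b hb
end

section
/- Let a, b ∈ ℤ with a ≠ 0, b ≥ 0, a² > 3b, and suppose a² < 4b. Then the minimal vectors of the quadratic form Q(x₁,x₂,x₃) = (a² − 2b)(x₁²+x₂²+x₃²) + 2b(x₁x₂+x₁x₃+x₂x₃) on ℤ³ all lie in the plane x₁ + x₂ + x₃ = 0; i.e., every x ∈ ℤ³ minimizing Q among nonzero vectors satisfies x₁ + x₂ + x₃ = 0, so the minimal vectors do not span ℝ³. -/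
theorem stmt_11 (a b : ℤ) (ha : a ≠ 0) (hb : 0 < b) (h3b : 3 * b < a ^ 2) (h4b : a ^ 2 < 4 * b) :
    ∀ x₁ x₂ x₃ : ℤ, ¬(x₁ = 0 ∧ x₂ = 0 ∧ x₃ = 0) →
      (∀ y₁ y₂ y₃ : ℤ, ¬(y₁ = 0 ∧ y₂ = 0 ∧ y₃ = 0) →
        (a ^ 2 - 2 * b) * (x₁ ^ 2 + x₂ ^ 2 + x₃ ^ 2) +
            2 * b * (x₁ * x₂ + x₁ * x₃ + x₂ * x₃) ≤
          (a ^ 2 - 2 * b) * (y₁ ^ 2 + y₂ ^ 2 + y₃ ^ 2) +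
            2 * b * (y₁ * y₂ + y₁ * y₃ + y₂ * y₃)) →
      x₁ + x₂ + x₃ = 0 := by
  intro x₁ x₂ x₃ hx hmin
  by_contra hs
  have h1 := hmin 1 (-1) 0 (by simp)
  have habs : 1 ≤ |x₁ + x₂ + x₃| := Int.one_le_abs hs
  have hsq : 1 ≤ (x₁ + x₂ + x₃) ^ 2 := by
    have := sq_abs (x₁ + x₂ + x₃)
    nlinarith
  have hS : 1 ≤ x₁ ^ 2 + x₂ ^ 2 + x₃ ^ 2 := by
    push_neg at hx
    by_cases h1' : x₁ = 0
    · by_cases h2' : x₂ = 0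
      · have h3' : x₃ ≠ 0 := hx h1' h2'
        have := Int.one_le_abs h3'
        nlinarith [sq_abs x₃, sq_nonneg x₁, sq_nonneg x₂]
      · have := Int.one_le_abs h2'
        nlinarith [sq_abs x₂, sq_nonneg x₁, sq_nonneg x₃]
    · have := Int.one_le_abs h1'
      nlinarith [sq_abs x₁, sq_nonneg x₂, sq_nonneg x₃]
  nlinarith [mul_nonneg (by linarith : (0:ℤ) ≤ a ^ 2 - 3 * b)
      (by linarith : (0:ℤ) ≤ x₁ ^ 2 + x₂ ^ 2 + x₃ ^ 2 - 1),
    mul_nonneg hb.le (by linarith : (0:ℤ) ≤ (x₁ + x₂ + x₃) ^ 2 - 1)]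
end

section
/- If a, b ∈ ℤ satisfy a ≠ 0 and a² = 4b, then the lattice generated by the cyclic shifts (α,β,γ), (γ,α,β), (β,γ,α) of the roots of x³ + ax² + bx + c (with distinct real roots) has center density (√(a²−2b)/2)³ / |a(a²−3b)| = 1/(4√2), the maximal center density of a lattice packing in dimension 3. -/
open Real

-- With y = x²/4 the minimum is x²/2 and the determinant x³/4, so the factor |x|³ cancels.
theorem centerDensity_eq_of_sq_eq_four_mul {x y : ℝ} (hx : x ≠ 0) (hxy : x ^ 2 = 4 * y) :
    (√(x ^ 2 - 2 * y) / 2) ^ 3 / |x * (x ^ 2 - 3 * y)| = 1 / (4 * √2) := by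
  have hmin : √(x ^ 2 - 2 * y) = |x| / √2 := by
    rw [show x ^ 2 - 2 * y = x ^ 2 / 2 by linear_combination hxy / 2,
      sqrt_div' _ zero_le_two, sqrt_sq_eq_abs]
  have hdet : |x * (x ^ 2 - 3 * y)| = |x| ^ 3 / 4 := by
    rw [show x * (x ^ 2 - 3 * y) = x ^ 3 / 4 by linear_combination 3 * x * hxy / 4,
      abs_div, abs_pow, abs_of_pos (four_pos : (0 : ℝ) < 4)]
  have hsqrt2 : √2 ^ 2 = 2 := sq_sqrt zero_le_two
  have habs_pos : 0 < |x| := abs_pos.mpr hx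
  rw [hmin, hdet]
  field_simp
  linear_combination -8 * hsqrt2

theorem stmt_12_general (a b : ℤ) (ha : a ≠ 0) (hab : a ^ 2 = 4 * b) :
    (Real.sqrt ((a : ℝ) ^ 2 - 2 * (b : ℝ)) / 2) ^ 3 /
        |(a : ℝ) * ((a : ℝ) ^ 2 - 3 * (b : ℝ))| = 1 / (4 * Real.sqrt 2) :=
  centerDensity_eq_of_sq_eq_four_mul (Int.cast_ne_zero.mpr ha) (by exact_mod_cast hab)

theorem stmt_12 (a b c : ℤ) (α β γ : ℝ) (ha : a ≠ 0) (hab : a ^ 2 = 4 * b)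
    (h1 : α ≠ β) (h2 : α ≠ γ) (h3 : β ≠ γ)
    (hsum : α + β + γ = -(a : ℝ)) (hsym2 : α * β + α * γ + β * γ = (b : ℝ))
    (hprod : α * β * γ = -(c : ℝ)) :
    (Real.sqrt ((a : ℝ) ^ 2 - 2 * (b : ℝ)) / 2) ^ 3 /
        |(a : ℝ) * ((a : ℝ) ^ 2 - 3 * (b : ℝ))| = 1 / (4 * Real.sqrt 2) :=
  stmt_12_general a b ha hab
end

section
/- Let α, β, γ, ψ be the real roots of x⁴ + ax³ + bx² + cx + d with α = −γ. For integers x₁, x₂, x₃, x₄, the squared Euclidean norm of x₁(α,β,γ,ψ) + x₂(β,γ,ψ,α) + x₃(γ,ψ,α,β) + x₄(ψ,α,β,γ) equals (a² − 2b)(x₁² + x₂² + x₃² + x₄²) + 4b(x₁x₃ + x₂x₄). -/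
/-! The sum of squares over the four cyclic shifts of `(α, β, γ, ψ)` is a quadratic form in `x`
whose coefficients are the cyclic autocorrelations of `(α, β, γ, ψ)`. With `α = -γ` and Vieta's
formulas, lag 0 is `a² - 2b`, lag 1 is `(α + γ)(β + ψ) = 0`, and lag 2 is `αγ + βψ = b`. -/

theorem sum_sq_cyclic_shifts {R : Type*} [CommRing R] (r₁ r₂ r₃ r₄ x₁ x₂ x₃ x₄ : R) :
    (x₁ * r₁ + x₂ * r₂ + x₃ * r₃ + x₄ * r₄) ^ 2 + (x₁ * r₂ + x₂ * r₃ + x₃ * r₄ + x₄ * r₁) ^ 2 +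
        (x₁ * r₃ + x₂ * r₄ + x₃ * r₁ + x₄ * r₂) ^ 2 + (x₁ * r₄ + x₂ * r₁ + x₃ * r₂ + x₄ * r₃) ^ 2 =
      (r₁ ^ 2 + r₂ ^ 2 + r₃ ^ 2 + r₄ ^ 2) * (x₁ ^ 2 + x₂ ^ 2 + x₃ ^ 2 + x₄ ^ 2) +
        2 * (r₁ * r₂ + r₂ * r₃ + r₃ * r₄ + r₄ * r₁) * (x₁ * x₂ + x₂ * x₃ + x₃ * x₄ + x₄ * x₁) +
        4 * (r₁ * r₃ + r₂ * r₄) * (x₁ * x₃ + x₂ * x₄) := by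
  ring

theorem stmt_15_general (a b α β γ ψ : ℝ) (hαγ : α = -γ)
    (h1 : β + ψ = -a) (h2 : -γ ^ 2 + β * ψ = b) :
    ∀ x₁ x₂ x₃ x₄ : ℤ,
      ((x₁ : ℝ) * α + (x₂ : ℝ) * β + (x₃ : ℝ) * γ + (x₄ : ℝ) * ψ) ^ 2 +
        ((x₁ : ℝ) * β + (x₂ : ℝ) * γ + (x₃ : ℝ) * ψ + (x₄ : ℝ) * α) ^ 2 +
        ((x₁ : ℝ) * γ + (x₂ : ℝ) * ψ + (x₃ : ℝ) * α + (x₄ : ℝ) * β) ^ 2 +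
        ((x₁ : ℝ) * ψ + (x₂ : ℝ) * α + (x₃ : ℝ) * β + (x₄ : ℝ) * γ) ^ 2 =
      (a ^ 2 - 2 * b) * ((x₁ : ℝ) ^ 2 + (x₂ : ℝ) ^ 2 + (x₃ : ℝ) ^ 2 + (x₄ : ℝ) ^ 2) +
        4 * b * ((x₁ : ℝ) * (x₃ : ℝ) + (x₂ : ℝ) * (x₄ : ℝ)) := by
  intro x₁ x₂ x₃ x₄
  subst hαγ
  have hlag0 : (-γ) ^ 2 + β ^ 2 + γ ^ 2 + ψ ^ 2 = a ^ 2 - 2 * b := by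
    rw [← h2, show a = -(β + ψ) by linarith]
    ring
  have hlag1 : -γ * β + β * γ + γ * ψ + ψ * -γ = 0 := by ring
  have hlag2 : -γ * γ + β * ψ = b := by rw [← h2]; ring
  rw [sum_sq_cyclic_shifts, hlag0, hlag1, hlag2]
  ring

theorem stmt_15 (a b c d α β γ ψ : ℝ) (hαγ : α = -γ)
    (h1 : β + ψ = -a) (h2 : -γ ^ 2 + β * ψ = b)
    (h3 : β * γ ^ 2 + γ ^ 2 * ψ = c) (h4 : -(β * γ ^ 2 * ψ) = d) :
    ∀ x₁ x₂ x₃ x₄ : ℤ,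
      ((x₁ : ℝ) * α + (x₂ : ℝ) * β + (x₃ : ℝ) * γ + (x₄ : ℝ) * ψ) ^ 2 +
        ((x₁ : ℝ) * β + (x₂ : ℝ) * γ + (x₃ : ℝ) * ψ + (x₄ : ℝ) * α) ^ 2 +
        ((x₁ : ℝ) * γ + (x₂ : ℝ) * ψ + (x₃ : ℝ) * α + (x₄ : ℝ) * β) ^ 2 +
        ((x₁ : ℝ) * ψ + (x₂ : ℝ) * α + (x₃ : ℝ) * β + (x₄ : ℝ) * γ) ^ 2 =
      (a ^ 2 - 2 * b) * ((x₁ : ℝ) ^ 2 + (x₂ : ℝ) ^ 2 + (x₃ : ℝ) ^ 2 + (x₄ : ℝ) ^ 2) +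
        4 * b * ((x₁ : ℝ) * (x₃ : ℝ) + (x₂ : ℝ) * (x₄ : ℝ)) :=
  stmt_15_general a b α β γ ψ hαγ h1 h2
end

section
/- Let a, b ∈ ℤ with a ≠ 0 and b ≥ 0. The quadratic form Q(x₁,x₂,x₃,x₄) = (a² − 2b)(x₁² + x₂² + x₃² + x₄²) + 4b(x₁x₃ + x₂x₄) satisfies Q(x) ≥ a² − 2b for all nonzero x ∈ ℤ⁴ if and only if a² ≥ 6b. -/
lemma aux_16 (a b : ℤ) (hb : 0 ≤ b) (h6 : a ^ 2 ≥ 6 * b) (h4 : 1 ≤ a ^ 2 - 4 * b)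
    (u v w z : ℤ) (hu : 1 ≤ u ^ 2) :
    (a ^ 2 - 2 * b) * (u ^ 2 + v ^ 2 + w ^ 2 + z ^ 2) +
        4 * b * (u * w + v * z) ≥ a ^ 2 - 2 * b := by
  rcases eq_or_ne (u + w) 0 with hp | hp
  · have hw : w = -u := by linarith
    subst hw
    nlinarith [sq_nonneg (v + z), sq_nonneg (v - z), mul_nonneg hb (sq_nonneg (v + z)),
      mul_nonneg hb (by linarith : (0:ℤ) ≤ u ^ 2), sq_nonneg v, sq_nonneg z]
  · have h1 : 1 ≤ (u + w) ^ 2 := by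
      rcases hp.lt_or_gt with h | h <;> nlinarith
    nlinarith [sq_nonneg (v + z), mul_nonneg hb (sq_nonneg (v + z)),
      mul_nonneg hb (by linarith : (0:ℤ) ≤ (u + w) ^ 2), sq_nonneg w, sq_nonneg v, sq_nonneg z,
      sq_nonneg (u + w)]

theorem stmt_16 (a b : ℤ) (ha : a ≠ 0) (hb : 0 ≤ b) (hnd : a ^ 2 - 4 * b ≠ 0) :
    (∀ x₁ x₂ x₃ x₄ : ℤ, ¬(x₁ = 0 ∧ x₂ = 0 ∧ x₃ = 0 ∧ x₄ = 0) →
        (a ^ 2 - 2 * b) * (x₁ ^ 2 + x₂ ^ 2 + x₃ ^ 2 + x₄ ^ 2) +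
            4 * b * (x₁ * x₃ + x₂ * x₄) ≥ a ^ 2 - 2 * b) ↔
      a ^ 2 ≥ 6 * b := by
  constructor
  · intro h
    have := h 1 0 (-1) 0 (by simp)
    nlinarith [this]
  · intro h6 x₁ x₂ x₃ x₄ hx
    have h4 : 1 ≤ a ^ 2 - 4 * b := by
      rcases lt_or_gt_of_ne hnd with h | h
      · linarith
      · linarith
    have sq1 : ∀ t : ℤ, t ≠ 0 → 1 ≤ t ^ 2 := by
      intro t ht
      rcases ht.lt_or_gt with h | h <;> nlinarith
    rcases eq_or_ne x₁ 0 with h1 | h1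
    · rcases eq_or_ne x₂ 0 with h2 | h2
      · rcases eq_or_ne x₃ 0 with h3 | h3
        · rcases eq_or_ne x₄ 0 with h4' | h4'
          · exact absurd ⟨h1, h2, h3, h4'⟩ hx
          · have := aux_16 a b hb h6 h4 x₄ x₃ x₂ x₁ (sq1 _ h4'); linarith [this]
        · have := aux_16 a b hb h6 h4 x₃ x₄ x₁ x₂ (sq1 _ h3); linarith [this]
      · have := aux_16 a b hb h6 h4 x₂ x₁ x₄ x₃ (sq1 _ h2); linarith [this]
    · have := aux_16 a b hb h6 h4 x₁ x₂ x₃ x₄ (sq1 _ h1); linarith [this]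
end

section
/- Let a, b ∈ ℤ with a ≠ 0, b > 0 and a² < 6b (and a² ≠ 4b). Then every minimizer x ∈ ℤ⁴ ∖ {0} of Q(x) = (a² − 2b)(x₁²+x₂²+x₃²+x₄²) + 4b(x₁x₃+x₂x₄) satisfies x₂ = −x₄ and x₁ = −x₃ or lies in the 2-dimensional subspace spanned by (1,0,−1,0) and (0,1,0,−1); in particular the set of minimal vectors does not span ℝ⁴. -/
/-!
Writing `S = x₁² + x₂² + x₃² + x₄²`, the form is
`Q(x) = (a² - 4b) S + 2b ((x₁ + x₃)² + (x₂ + x₄)²)`.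
The vector `(1, 0, -1, 0)` gives `Q = 2(a² - 4b)`, so a minimizer has `Q(x) ≤ 2(a² - 4b)`.
If `x₁ + x₃ ≠ 0` or `x₂ + x₄ ≠ 0`, then `S ≥ 1` forces `Q(x) ≥ (a² - 4b) + 2b`, which exceeds
`2(a² - 4b)` exactly because `a² < 6b`.
-/

def quadForm (a b x₁ x₂ x₃ x₄ : ℤ) : ℤ :=
  (a ^ 2 - 2 * b) * (x₁ ^ 2 + x₂ ^ 2 + x₃ ^ 2 + x₄ ^ 2) + 4 * b * (x₁ * x₃ + x₂ * x₄)

lemma quadForm_eq (a b x₁ x₂ x₃ x₄ : ℤ) :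
    quadForm a b x₁ x₂ x₃ x₄ = (a ^ 2 - 4 * b) * (x₁ ^ 2 + x₂ ^ 2 + x₃ ^ 2 + x₄ ^ 2)
      + 2 * b * ((x₁ + x₃) ^ 2 + (x₂ + x₄) ^ 2) := by
  unfold quadForm; ring

lemma quadForm_one_zero_neg_one_zero (a b : ℤ) :
    quadForm a b 1 0 (-1) 0 = 2 * (a ^ 2 - 4 * b) := by
  unfold quadForm; ring

lemma Int.one_le_sq_add_sq_of_ne_zero {x y : ℤ} (h : x ≠ 0 ∨ y ≠ 0) : 1 ≤ x ^ 2 + y ^ 2 := by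
  rcases h with h | h
  · linarith [Int.one_le_sq_of_ne_zero h, sq_nonneg y]
  · linarith [Int.one_le_sq_of_ne_zero h, sq_nonneg x]

lemma Int.one_le_sum_sq_of_ne_zero {x₁ x₂ x₃ x₄ : ℤ} (hx : ¬(x₁ = 0 ∧ x₂ = 0 ∧ x₃ = 0 ∧ x₄ = 0)) :
    1 ≤ x₁ ^ 2 + x₂ ^ 2 + x₃ ^ 2 + x₄ ^ 2 := by
  by_contra! h
  apply hx
  refine ⟨?_, ?_, ?_, ?_⟩ <;> nlinarith [sq_nonneg x₁, sq_nonneg x₂, sq_nonneg x₃, sq_nonneg x₄]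

lemma two_mul_lt_quadForm {a b x₁ x₂ x₃ x₄ : ℤ} (h4b : 4 * b < a ^ 2) (h6b : a ^ 2 < 6 * b)
    (hx : ¬(x₁ = 0 ∧ x₂ = 0 ∧ x₃ = 0 ∧ x₄ = 0)) (hsum : x₁ + x₃ ≠ 0 ∨ x₂ + x₄ ≠ 0) :
    2 * (a ^ 2 - 4 * b) < quadForm a b x₁ x₂ x₃ x₄ := by
  have hS := Int.one_le_sum_sq_of_ne_zero hx
  have hT := Int.one_le_sq_add_sq_of_ne_zero hsum
  have hc : 0 ≤ a ^ 2 - 4 * b := by linarith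
  have hb : 0 ≤ 2 * b := by linarith
  calc 2 * (a ^ 2 - 4 * b) < (a ^ 2 - 4 * b) * 1 + 2 * b * 1 := by linarith
    _ ≤ (a ^ 2 - 4 * b) * (x₁ ^ 2 + x₂ ^ 2 + x₃ ^ 2 + x₄ ^ 2)
          + 2 * b * ((x₁ + x₃) ^ 2 + (x₂ + x₄) ^ 2) := by gcongr
    _ = quadForm a b x₁ x₂ x₃ x₄ := (quadForm_eq a b x₁ x₂ x₃ x₄).symm

theorem stmt_18_general (a b : ℤ) (h4b : 4 * b < a ^ 2) (h6b : a ^ 2 < 6 * b) :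
    ∀ x₁ x₂ x₃ x₄ : ℤ, ¬(x₁ = 0 ∧ x₂ = 0 ∧ x₃ = 0 ∧ x₄ = 0) →
      (∀ y₁ y₂ y₃ y₄ : ℤ, ¬(y₁ = 0 ∧ y₂ = 0 ∧ y₃ = 0 ∧ y₄ = 0) →
        (a ^ 2 - 2 * b) * (x₁ ^ 2 + x₂ ^ 2 + x₃ ^ 2 + x₄ ^ 2) +
            4 * b * (x₁ * x₃ + x₂ * x₄) ≤
          (a ^ 2 - 2 * b) * (y₁ ^ 2 + y₂ ^ 2 + y₃ ^ 2 + y₄ ^ 2) +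
            4 * b * (y₁ * y₃ + y₂ * y₄)) →
      (x₁ = -x₃ ∧ x₂ = -x₄) := by
  intro x₁ x₂ x₃ x₄ hx hmin
  have hle : quadForm a b x₁ x₂ x₃ x₄ ≤ quadForm a b 1 0 (-1) 0 := hmin 1 0 (-1) 0 (by norm_num)
  by_contra hne
  have hlt := two_mul_lt_quadForm h4b h6b hx (by omega)
  rw [quadForm_one_zero_neg_one_zero] at hle
  exact hle.not_gt hlt

theorem stmt_18 (a b : ℤ) (ha : a ≠ 0) (hb : 0 < b) (h4b : 4 * b < a ^ 2) (h6b : a ^ 2 < 6 * b) :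
    ∀ x₁ x₂ x₃ x₄ : ℤ, ¬(x₁ = 0 ∧ x₂ = 0 ∧ x₃ = 0 ∧ x₄ = 0) →
      (∀ y₁ y₂ y₃ y₄ : ℤ, ¬(y₁ = 0 ∧ y₂ = 0 ∧ y₃ = 0 ∧ y₄ = 0) →
        (a ^ 2 - 2 * b) * (x₁ ^ 2 + x₂ ^ 2 + x₃ ^ 2 + x₄ ^ 2) +
            4 * b * (x₁ * x₃ + x₂ * x₄) ≤
          (a ^ 2 - 2 * b) * (y₁ ^ 2 + y₂ ^ 2 + y₃ ^ 2 + y₄ ^ 2) +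
            4 * b * (y₁ * y₃ + y₂ * y₄)) →
      (x₁ = -x₃ ∧ x₂ = -x₄) :=
  stmt_18_general a b h4b h6b
end
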